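/- arXiv:1802.04139 — 3 statements merged into one kernel-verified Lean document; each statement's English description precedes it below -/
import Mathlib

section
/- Let ω̄ ∈ ℝ^ν, τ > 0, N > 1 with N^{-τ} ≤ 1/4, λ ∈ [1/2,3/2], μ ∈ [1/2,2], ℓ ∈ ℤ^ν and j ∈ ℤ^d \ {0}. Then the set { θ ∈ ℝ : | −(λω̄·ℓ + θ)² + μ|j|² | ≤ N^{-τ} } is contained in the union of two intervals, each of length at most 2 N^{-τ}; in particular its Lebesgue measure is at most 4 N^{-τ}. -/
open MeasureTheory
open scoped BigOperators ENNReal NNReal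

noncomputable section

/-- The index set `ℤ^ν × ℤ^d`. -/
abbrev Idx (ν d : ℕ) := (Fin ν → ℤ) × (Fin d → ℤ)

/-- Euclidean norm of an integer vector. -/
def znorm {n : ℕ} (ℓ : Fin n → ℤ) : ℝ := Real.sqrt (∑ i, ((ℓ i : ℝ)) ^ 2)

/-- The `γ₀`-Diophantine condition `|ω̄·ℓ| ≥ γ₀/|ℓ|^ν`. -/
def Diophantine {ν : ℕ} (γ₀ : ℝ) (ωb : Fin ν → ℝ) : Prop :=
  ∀ ℓ : Fin ν → ℤ, ℓ ≠ 0 → γ₀ / znorm ℓ ^ ν ≤ |∑ i, ωb i * (ℓ i : ℝ)|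

/-- The block of indices `{(ℓ,j) : j ≠ 0, |ℓ| ≤ N, |j − j₀| ≤ N}`. -/
def Eset (ν d : ℕ) (N : ℝ) (j₀ : Fin d → ℤ) : Set (Idx ν d) :=
  {k | k.2 ≠ 0 ∧ znorm k.1 ≤ N ∧ znorm (k.2 - j₀) ≤ N}

/-- The `ℓ²` operator norm of a finite complex matrix. -/
def opNorm {n : Type*} [Fintype n] [DecidableEq n] (M : Matrix n n ℂ) : ℝ :=
  ‖Matrix.toEuclideanCLM (𝕜 := ℂ) M‖

/-- The diagonal entry `−(λω̄·ℓ + θ)² + μ|j|²`. -/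
def dEntry (ν d : ℕ) (ωb : Fin ν → ℝ) (lam θ μv : ℝ) (k : Idx ν d) : ℝ :=
  -(lam * (∑ i, ωb i * (k.1 i : ℝ)) + θ) ^ 2 + μv * ∑ i, ((k.2 i : ℝ)) ^ 2

/-- The matrix `A(θ) = D(λ,θ) + T` restricted to a finite block `E`. -/
def Amat {ν d : ℕ} (ωb : Fin ν → ℝ) (E : Finset (Idx ν d)) (lam θ μv : ℝ)
    (T : Matrix ↥E ↥E ℂ) : Matrix ↥E ↥E ℂ :=
  Matrix.diagonal (fun k : ↥E => ((dEntry ν d ωb lam θ μv (k : Idx ν d) : ℝ) : ℂ)) + T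

/-- The set of `θ` where a diagonal entry `−(λω̄·ℓ+θ)² + μ|j|²` is `N^{-τ}`-small is contained
in two intervals of length `≤ 2N^{-τ}`, and has measure `≤ 4 N^{-τ}`. -/
theorem small_divisor_theta_set
    (ν d : ℕ) (hν : 1 ≤ ν) (hd : 1 ≤ d) (ωb : Fin ν → ℝ)
    (τ : ℝ) (hτ : 0 < τ) (N : ℝ) (hN : 1 < N) (hNτ : N ^ (-τ) ≤ 1/4)
    (lam : ℝ) (hlam : lam ∈ Set.Icc (1/2 : ℝ) (3/2))
    (μv : ℝ) (hμ : μv ∈ Set.Icc (1/2 : ℝ) 2)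
    (ℓ : Fin ν → ℤ) (j : Fin d → ℤ) (hj : j ≠ 0) :
    ∃ a₁ b₁ a₂ b₂ : ℝ,
      b₁ - a₁ ≤ 2 * N ^ (-τ) ∧ b₂ - a₂ ≤ 2 * N ^ (-τ) ∧
      {θ : ℝ | |dEntry ν d ωb lam θ μv (ℓ, j)| ≤ N ^ (-τ)}
        ⊆ Set.Icc a₁ b₁ ∪ Set.Icc a₂ b₂ ∧
      volume {θ : ℝ | |dEntry ν d ωb lam θ μv (ℓ, j)| ≤ N ^ (-τ)}
        ≤ ENNReal.ofReal (4 * N ^ (-τ)) := by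
  set ε := N ^ (-τ) with hε
  have hε0 : 0 < ε := Real.rpow_pos_of_pos (by linarith) _
  set c := lam * (∑ i, ωb i * (ℓ i : ℝ)) with hc
  set m := μv * ∑ i, ((j i : ℝ)) ^ 2 with hm
  have hsum1 : (1 : ℝ) ≤ ∑ i, ((j i : ℝ)) ^ 2 := by
    obtain ⟨i, hi⟩ : ∃ i, j i ≠ 0 := by
      by_contra h; push_neg at h; exact hj (funext h)
    have h1 : (1 : ℝ) ≤ ((j i : ℝ)) ^ 2 := by
      have : (1 : ℤ) ≤ (j i) ^ 2 := by
        rcases lt_or_gt_of_ne hi with h | h <;> nlinarith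
      exact_mod_cast this
    calc (1:ℝ) ≤ ((j i : ℝ))^2 := h1
      _ ≤ ∑ i, ((j i : ℝ)) ^ 2 :=
        Finset.single_le_sum (f := fun k => ((j k : ℝ))^2) (fun k _ => sq_nonneg _) (Finset.mem_univ i)
  have hm2 : (1:ℝ)/2 ≤ m := by
    have := hμ.1
    calc (1:ℝ)/2 = (1/2) * 1 := by ring
      _ ≤ μv * ∑ i, ((j i : ℝ)) ^ 2 := by
        apply mul_le_mul this hsum1 (by norm_num) (by linarith)
  have hme : (1:ℝ)/4 ≤ m - ε := by linarith
  set s := Real.sqrt (m - ε) with hs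
  set t := Real.sqrt (m + ε) with ht
  have hs2 : (1:ℝ)/2 ≤ s := by
    have : Real.sqrt (1/4) ≤ s := Real.sqrt_le_sqrt hme
    rwa [show (1:ℝ)/4 = (1/2)^2 by norm_num, Real.sqrt_sq (by norm_num)] at this
  have hssq : s ^ 2 = m - ε := Real.sq_sqrt (by linarith)
  have htsq : t ^ 2 = m + ε := Real.sq_sqrt (by linarith)
  have hts : t ≤ s + 2 * ε := by
    have h1 : t = Real.sqrt (m + ε) := ht
    have h2 : m + ε ≤ (s + 2 * ε) ^ 2 := by nlinarith
    calc t = Real.sqrt (m + ε) := ht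
      _ ≤ Real.sqrt ((s + 2 * ε) ^ 2) := Real.sqrt_le_sqrt h2
      _ = s + 2 * ε := Real.sqrt_sq (by linarith)
  refine ⟨-c - t, -c - s, -c + s, -c + t, by linarith, by linarith, ?_, ?_⟩
  · intro θ hθ
    simp only [Set.mem_setOf_eq] at hθ
    have hd' : dEntry ν d ωb lam θ μv (ℓ, j) = -(c + θ)^2 + m := rfl
    rw [hd'] at hθ
    rw [abs_le] at hθ
    have hlo : m - ε ≤ (c + θ)^2 := by linarith [hθ.2]
    have hhi : (c + θ)^2 ≤ m + ε := by linarith [hθ.1]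
    have habs1 : s ≤ |c + θ| := by
      have := Real.sqrt_le_sqrt hlo
      rwa [Real.sqrt_sq_eq_abs] at this
    have habs2 : |c + θ| ≤ t := by
      have := Real.sqrt_le_sqrt hhi
      rwa [Real.sqrt_sq_eq_abs] at this
    rcases le_or_gt 0 (c + θ) with h | h
    · right
      rw [abs_of_nonneg h] at habs1 habs2
      exact ⟨by linarith, by linarith⟩
    · left
      rw [abs_of_neg h] at habs1 habs2
      exact ⟨by linarith, by linarith⟩
  · calc volume {θ : ℝ | |dEntry ν d ωb lam θ μv (ℓ, j)| ≤ ε}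
        ≤ volume (Set.Icc (-c - t) (-c - s) ∪ Set.Icc (-c + s) (-c + t)) := by
          apply measure_mono
          intro θ hθ
          simp only [Set.mem_setOf_eq] at hθ
          have hd' : dEntry ν d ωb lam θ μv (ℓ, j) = -(c + θ)^2 + m := rfl
          rw [hd'] at hθ
          rw [abs_le] at hθ
          have hlo : m - ε ≤ (c + θ)^2 := by linarith [hθ.2]
          have hhi : (c + θ)^2 ≤ m + ε := by linarith [hθ.1]
          have habs1 : s ≤ |c + θ| := by
            have := Real.sqrt_le_sqrt hlo
            rwa [Real.sqrt_sq_eq_abs] at this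
          have habs2 : |c + θ| ≤ t := by
            have := Real.sqrt_le_sqrt hhi
            rwa [Real.sqrt_sq_eq_abs] at this
          rcases le_or_gt 0 (c + θ) with h | h
          · right; rw [abs_of_nonneg h] at habs1 habs2
            exact ⟨by linarith, by linarith⟩
          · left; rw [abs_of_neg h] at habs1 habs2
            exact ⟨by linarith, by linarith⟩
      _ ≤ volume (Set.Icc (-c - t) (-c - s)) + volume (Set.Icc (-c + s) (-c + t)) :=
          measure_union_le _ _
      _ = ENNReal.ofReal ((-c - s) - (-c - t)) + ENNReal.ofReal ((-c + t) - (-c + s)) := by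
          rw [Real.volume_Icc, Real.volume_Icc]
      _ ≤ ENNReal.ofReal (2 * ε) + ENNReal.ofReal (2 * ε) := by
          gcongr <;> linarith
      _ = ENNReal.ofReal (4 * ε) := by
          rw [← ENNReal.ofReal_add (by linarith) (by linarith)]; ring_nf
end
end

section
/- Let ω̄ ∈ ℝ^ν be γ₀-Diophantine. Then for every ℓ ∈ ℤ^ν \ {0}, every j ∈ ℤ^d, and every δ > 0, the Lebesgue measure of the set { λ ∈ [1/2,3/2] : | (λω̄·ℓ)² − |j|² | ≤ δ } is at most 2 γ₀^{-2} |ℓ|^{2ν} δ. In particular, for N₀ ≥ 2, τ₀ > 0 and |ℓ| ≤ N₀ the measure is at most 2 γ₀^{-2} N₀^{-τ₀ + 2ν} when δ = N₀^{-τ₀}. -/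
open MeasureTheory
open scoped BigOperators ENNReal NNReal

noncomputable section

set_option maxHeartbeats 2000000 in
/-- Measure of the near-resonant set of `λ` for a single pair `(ℓ,j)`. -/
theorem resonant_lambda_measure
    (ν d : ℕ) (hν : 1 ≤ ν) (hd : 1 ≤ d) (γ₀ : ℝ) (hγ : 0 < γ₀)
    (ωb : Fin ν → ℝ) (hdio : Diophantine γ₀ ωb)
    (ℓ : Fin ν → ℤ) (hℓ : ℓ ≠ 0) (j : Fin d → ℤ) (δ : ℝ) (hδ : 0 < δ) :
    volume {lam ∈ Set.Icc (1/2 : ℝ) (3/2) |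
        |(lam * ∑ i, ωb i * (ℓ i : ℝ)) ^ 2 - ∑ i, ((j i : ℝ)) ^ 2| ≤ δ}
      ≤ ENNReal.ofReal (2 * γ₀⁻¹ ^ 2 * znorm ℓ ^ (2 * ν) * δ) ∧
    ∀ N₀ τ₀ : ℝ, 2 ≤ N₀ → 0 < τ₀ → znorm ℓ ≤ N₀ → δ = N₀ ^ (-τ₀) →
      volume {lam ∈ Set.Icc (1/2 : ℝ) (3/2) |
          |(lam * ∑ i, ωb i * (ℓ i : ℝ)) ^ 2 - ∑ i, ((j i : ℝ)) ^ 2| ≤ δ}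
        ≤ ENNReal.ofReal (2 * γ₀⁻¹ ^ 2 * N₀ ^ (-τ₀ + 2 * ν)) := by
  classical
  set a := ∑ i, ωb i * (ℓ i : ℝ) with ha_def
  set c := ∑ i, ((j i : ℝ)) ^ 2 with hc_def
  have hc0 : 0 ≤ c := Finset.sum_nonneg fun i _ => sq_nonneg _
  have hz0 : 0 < znorm ℓ := by
    obtain ⟨i, hi⟩ := Function.ne_iff.mp hℓ
    have hir : (ℓ i : ℝ) ≠ 0 := Int.cast_ne_zero.mpr hi
    have hpos : 0 < ∑ i, ((ℓ i : ℝ)) ^ 2 :=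
      Finset.sum_pos' (fun i _ => sq_nonneg _) ⟨i, Finset.mem_univ i, by positivity⟩
    exact Real.sqrt_pos.mpr hpos
  have hzp : 0 < znorm ℓ ^ ν := pow_pos hz0 ν
  have ha : γ₀ / znorm ℓ ^ ν ≤ |a| := hdio ℓ hℓ
  have ha0 : 0 < |a| := lt_of_lt_of_le (div_pos hγ hzp) ha
  have hane : a ≠ 0 := abs_pos.mp ha0
  have hb : 0 < a ^ 2 := by positivity
  set b := a ^ 2 with hb_def
  have haz : γ₀ ≤ |a| * znorm ℓ ^ ν := (div_le_iff₀ hzp).mp ha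
  have hkey : γ₀ ^ 2 ≤ b * znorm ℓ ^ (2 * ν) := by
    have h1 : γ₀ ^ 2 ≤ (|a| * znorm ℓ ^ ν) ^ 2 := by
      have := mul_le_mul haz haz hγ.le (by positivity)
      nlinarith
    have h2 : (|a| * znorm ℓ ^ ν) ^ 2 = b * znorm ℓ ^ (2 * ν) := by
      rw [mul_pow, sq_abs, ← pow_mul, hb_def]
      ring_nf
    linarith [h2 ▸ h1]
  set L0 := Real.sqrt (max 0 ((c - δ) / b)) with hL0_def
  set L := max (1 / 2 : ℝ) L0 with hL_def
  set len := 2 * δ / b with hlen_def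
  have hlen0 : 0 ≤ len := by positivity
  have hL0nn : 0 ≤ L0 := Real.sqrt_nonneg _
  have hLhalf : (1 / 2 : ℝ) ≤ L := le_max_left _ _
  have hL0sq : L0 ^ 2 = max 0 ((c - δ) / b) := Real.sq_sqrt (le_max_left _ _)
  have hsub : {lam ∈ Set.Icc (1 / 2 : ℝ) (3 / 2) |
      |(lam * a) ^ 2 - c| ≤ δ} ⊆ Set.Icc L (L + len) := by
    rintro lam ⟨⟨h1, h2⟩, h3⟩
    obtain ⟨hlo, hhi⟩ := abs_le.mp h3
    have hsqb : (lam * a) ^ 2 = lam ^ 2 * b := by rw [hb_def]; ring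
    have hlo' : (c - δ) / b ≤ lam ^ 2 := by
      rw [div_le_iff₀ hb]; nlinarith
    have hmax : max 0 ((c - δ) / b) ≤ lam ^ 2 := max_le (sq_nonneg _) hlo'
    have hL0lam : L0 ≤ lam := by
      calc L0 = Real.sqrt (max 0 ((c - δ) / b)) := rfl
        _ ≤ Real.sqrt (lam ^ 2) := Real.sqrt_le_sqrt hmax
        _ = lam := by rw [Real.sqrt_sq (by linarith)]
    have hLlam : L ≤ lam := max_le h1 hL0lam
    have hupper : lam ^ 2 ≤ L ^ 2 + len := by
      have h4 : lam ^ 2 ≤ (c + δ) / b := by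
        rw [le_div_iff₀ hb]; nlinarith
      have h5 : (c + δ) / b = (c - δ) / b + len := by
        rw [hlen_def]; field_simp; ring
      have h6 : (c - δ) / b ≤ L0 ^ 2 := by
        rw [hL0sq]; exact le_max_right _ _
      have h7 : L0 ^ 2 ≤ L ^ 2 := by
        apply pow_le_pow_left₀ hL0nn (le_max_right _ _)
      linarith
    refine ⟨hLlam, ?_⟩
    have aux : ∀ x y l : ℝ, x ^ 2 ≤ y ^ 2 + l → 1 / 2 ≤ y → 1 / 2 ≤ x → 0 ≤ l →
        x ≤ y + l := by
      intro x y l hx hy hxx hl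
      nlinarith
    exact aux lam L len hupper hLhalf h1 hlen0
  have hmain : volume {lam ∈ Set.Icc (1 / 2 : ℝ) (3 / 2) |
      |(lam * a) ^ 2 - c| ≤ δ}
      ≤ ENNReal.ofReal (2 * γ₀⁻¹ ^ 2 * znorm ℓ ^ (2 * ν) * δ) := by
    calc volume {lam ∈ Set.Icc (1 / 2 : ℝ) (3 / 2) | |(lam * a) ^ 2 - c| ≤ δ}
        ≤ volume (Set.Icc L (L + len)) := measure_mono hsub
      _ = ENNReal.ofReal len := by rw [Real.volume_Icc]; ring_nf
      _ ≤ ENNReal.ofReal (2 * γ₀⁻¹ ^ 2 * znorm ℓ ^ (2 * ν) * δ) := by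
          apply ENNReal.ofReal_le_ofReal
          rw [hlen_def, div_le_iff₀ hb]
          have h1 : (1 : ℝ) ≤ γ₀⁻¹ ^ 2 * (b * znorm ℓ ^ (2 * ν)) := by
            have h2 : γ₀⁻¹ ^ 2 * γ₀ ^ 2 = 1 := by field_simp
            calc (1 : ℝ) = γ₀⁻¹ ^ 2 * γ₀ ^ 2 := h2.symm
              _ ≤ _ := mul_le_mul_of_nonneg_left hkey (by positivity)
          nlinarith [mul_le_mul_of_nonneg_left h1 (by positivity : (0:ℝ) ≤ 2 * δ)]
  refine ⟨hmain, ?_⟩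
  intro N₀ τ₀ hN hτ hzN hδeq
  apply le_trans hmain
  apply ENNReal.ofReal_le_ofReal
  have hN0 : (0 : ℝ) < N₀ := by linarith
  have hzpow : znorm ℓ ^ (2 * ν) ≤ N₀ ^ (2 * ν) := pow_le_pow_left₀ hz0.le hzN _
  have hrw : N₀ ^ (-τ₀ + 2 * (ν : ℝ)) = N₀ ^ (2 * ν : ℕ) * δ := by
    rw [hδeq, Real.rpow_add hN0, mul_comm]
    congr 1
    rw [← Real.rpow_natCast N₀ (2 * ν)]
    push_cast
    ring_nf
  calc 2 * γ₀⁻¹ ^ 2 * znorm ℓ ^ (2 * ν) * δ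
      ≤ 2 * γ₀⁻¹ ^ 2 * N₀ ^ (2 * ν) * δ := by
        have hδ0 : 0 ≤ δ := hδ.le
        gcongr
    _ = 2 * γ₀⁻¹ ^ 2 * N₀ ^ (-τ₀ + 2 * (ν : ℝ)) := by rw [hrw]; ring
end
end

section
/- Let ω̄ ∈ ℝ^ν be γ₀-Diophantine and let τ₀ > d + 3ν + 1. For N₀ ≥ 2 define Ī(N₀,τ₀) := { λ ∈ [1/2,3/2] : | (λω̄·ℓ)² − |j|² | ≥ N₀^{-τ₀} for all (ℓ,j) ∈ ℤ^ν × (ℤ^d \ {0}) with |(ℓ,j)| ≤ N₀ }. Then there exists a constant C = C(ν,d,γ₀) such that for every N₀ ≥ 2 the Lebesgue measure of [1/2,3/2] \ Ī(N₀,τ₀) is at most C N₀^{-1}. -/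
open MeasureTheory
open scoped BigOperators ENNReal NNReal

noncomputable section

lemma znorm_nonneg {n : ℕ} (ℓ : Fin n → ℤ) : 0 ≤ znorm ℓ := Real.sqrt_nonneg _

lemma znorm_sq {n : ℕ} (ℓ : Fin n → ℤ) : znorm ℓ ^ 2 = ∑ i, ((ℓ i : ℝ)) ^ 2 :=
  Real.sq_sqrt (by positivity)

lemma one_le_sumsq {n : ℕ} {v : Fin n → ℤ} (hv : v ≠ 0) : (1:ℝ) ≤ ∑ i, ((v i : ℝ)) ^ 2 := by
  obtain ⟨i, hi⟩ := Function.ne_iff.mp hv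
  have h2 : (1:ℤ) ≤ |v i| := Int.one_le_abs (by simpa using hi)
  have h3 : (1:ℝ) ≤ |((v i : ℤ) : ℝ)| := by
    rw [← Int.cast_abs]; exact_mod_cast h2
  have h1 : (1:ℝ) ≤ ((v i : ℝ)) ^ 2 := by
    nlinarith [abs_nonneg ((v i : ℝ)), sq_abs ((v i : ℝ))]
  exact h1.trans (Finset.single_le_sum (f := fun i => ((v i : ℝ)) ^ 2)
    (fun j _ => sq_nonneg _) (Finset.mem_univ i))

lemma one_le_znorm {n : ℕ} {v : Fin n → ℤ} (hv : v ≠ 0) : (1:ℝ) ≤ znorm v := by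
  have h := one_le_sumsq hv
  have := znorm_sq v
  nlinarith [znorm_nonneg v]

lemma coord_bound {n : ℕ} {ℓ : Fin n → ℤ} {N : ℝ} (hN : 0 ≤ N) (h : znorm ℓ ≤ N) (i : Fin n) :
    -⌊N⌋ ≤ ℓ i ∧ ℓ i ≤ ⌊N⌋ := by
  have h1 : ((ℓ i : ℝ)) ^ 2 ≤ znorm ℓ ^ 2 := by
    rw [znorm_sq]
    exact Finset.single_le_sum (f := fun i => ((ℓ i : ℝ)) ^ 2)
      (fun j _ => sq_nonneg _) (Finset.mem_univ i)
  have h2 : ((ℓ i : ℝ)) ^ 2 ≤ N ^ 2 := by nlinarith [znorm_nonneg ℓ]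
  have h3 : -N ≤ ((ℓ i : ℝ)) ∧ ((ℓ i : ℝ)) ≤ N := by constructor <;> nlinarith
  refine ⟨?_, Int.le_floor.mpr h3.2⟩
  rw [neg_le]
  exact Int.le_floor.mpr (by push_cast; linarith [h3.1])

set_option maxHeartbeats 1600000 in
/-- Measure estimate for the complement of the set `Ī(N₀,τ₀)` of non-resonant parameters. -/
theorem Ibar_complement_measure
    (ν d : ℕ) (hν : 1 ≤ ν) (hd : 1 ≤ d) (γ₀ : ℝ) (hγ : 0 < γ₀)
    (ωb : Fin ν → ℝ) (hdio : Diophantine γ₀ ωb)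
    (τ₀ : ℝ) (hτ₀ : (d : ℝ) + 3 * ν + 1 < τ₀) :
    ∃ C : ℝ, 0 < C ∧ ∀ N₀ : ℝ, 2 ≤ N₀ →
      volume (Set.Icc (1/2 : ℝ) (3/2) \
          {lam ∈ Set.Icc (1/2 : ℝ) (3/2) |
            ∀ k : Idx ν d, k.2 ≠ 0 →
              Real.sqrt (znorm k.1 ^ 2 + znorm k.2 ^ 2) ≤ N₀ →
              N₀ ^ (-τ₀) ≤
                |(lam * ∑ i, ωb i * (k.1 i : ℝ)) ^ 2 - ∑ i, ((k.2 i : ℝ)) ^ 2|})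
        ≤ ENNReal.ofReal (C * N₀⁻¹) := by
  classical
  refine ⟨2 * 3 ^ (ν + d) / γ₀, by positivity, ?_⟩
  intro N₀ hN₀
  have hN0 : (0:ℝ) < N₀ := by linarith
  have hN1 : (1:ℝ) ≤ N₀ := by linarith
  have hνR : (1:ℝ) ≤ (ν : ℝ) := by exact_mod_cast hν
  have hdR : (0:ℝ) ≤ (d : ℝ) := Nat.cast_nonneg d
  set ε : ℝ := N₀ ^ (-τ₀) with hεdef
  have hτpos : (0:ℝ) < τ₀ := by linarith
  have hεpos : 0 < ε := Real.rpow_pos_of_pos hN0 _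
  have hεle1 : ε ≤ 1 := Real.rpow_le_one_of_one_le_of_nonpos hN1 (by linarith)
  set Bad : Idx ν d → Set ℝ := fun k =>
    {lam | lam ∈ Set.Icc (1/2:ℝ) (3/2) ∧ k.2 ≠ 0 ∧
      Real.sqrt (znorm k.1 ^ 2 + znorm k.2 ^ 2) ≤ N₀ ∧
      |(lam * ∑ i, ωb i * (k.1 i : ℝ)) ^ 2 - ∑ i, ((k.2 i : ℝ)) ^ 2| < ε} with hBad
  set M : ℤ := ⌊N₀⌋ with hMdef
  set S : Finset (Idx ν d) :=
    (Finset.Icc (fun _ => -M) (fun _ => M)) ×ˢ (Finset.Icc (fun _ => -M) (fun _ => M)) with hSdef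
  -- znorm bounds from the joint norm bound
  have hzsplit : ∀ (l : Fin ν → ℤ) (j : Fin d → ℤ),
      Real.sqrt (znorm l ^ 2 + znorm j ^ 2) ≤ N₀ → znorm l ≤ N₀ ∧ znorm j ≤ N₀ := by
    intro l j h
    constructor
    · calc znorm l = Real.sqrt (znorm l ^ 2) := (Real.sqrt_sq (znorm_nonneg l)).symm
        _ ≤ Real.sqrt (znorm l ^ 2 + znorm j ^ 2) :=
            Real.sqrt_le_sqrt (by nlinarith [sq_nonneg (znorm j)])
        _ ≤ N₀ := h
    · calc znorm j = Real.sqrt (znorm j ^ 2) := (Real.sqrt_sq (znorm_nonneg j)).symm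
        _ ≤ Real.sqrt (znorm l ^ 2 + znorm j ^ 2) :=
            Real.sqrt_le_sqrt (by nlinarith [sq_nonneg (znorm l)])
        _ ≤ N₀ := h
  -- the bad set is covered by the Bad k for k in S
  have hsub : (Set.Icc (1/2 : ℝ) (3/2) \
      {lam ∈ Set.Icc (1/2 : ℝ) (3/2) |
        ∀ k : Idx ν d, k.2 ≠ 0 →
          Real.sqrt (znorm k.1 ^ 2 + znorm k.2 ^ 2) ≤ N₀ →
          N₀ ^ (-τ₀) ≤
            |(lam * ∑ i, ωb i * (k.1 i : ℝ)) ^ 2 - ∑ i, ((k.2 i : ℝ)) ^ 2|})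
      ⊆ ⋃ k ∈ S, Bad k := by
    intro lam hlam
    obtain ⟨hIcc, hnot⟩ := hlam
    rw [Set.mem_sep_iff] at hnot
    push_neg at hnot
    obtain ⟨k, hk2, hknorm, hklt⟩ := hnot hIcc
    have hkS : k ∈ S := by
      obtain ⟨hl, hj⟩ := hzsplit k.1 k.2 hknorm
      rw [hSdef, Finset.mem_product, Finset.mem_Icc, Finset.mem_Icc]
      refine ⟨⟨fun i => (coord_bound (le_of_lt hN0) hl i).1,
              fun i => (coord_bound (le_of_lt hN0) hl i).2⟩,
             ⟨fun i => (coord_bound (le_of_lt hN0) hj i).1,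
              fun i => (coord_bound (le_of_lt hN0) hj i).2⟩⟩
    exact Set.mem_biUnion hkS ⟨hIcc, hk2, hknorm, hklt⟩
  -- per-index measure bound
  have hvol : ∀ k ∈ S, volume (Bad k) ≤ ENNReal.ofReal (2 * ε * N₀ ^ ν / γ₀) := by
    intro k _
    rcases Set.eq_empty_or_nonempty (Bad k) with he | ⟨lam₀, hlam₀⟩
    · simp [he]
    obtain ⟨hIcc₀, hj, hnorm, habs₀⟩ := hlam₀
    set a : ℝ := ∑ i, ωb i * (k.1 i : ℝ) with ha
    set b : ℝ := ∑ i, ((k.2 i : ℝ)) ^ 2 with hb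
    have hb1 : (1:ℝ) ≤ b := one_le_sumsq hj
    by_cases hl : k.1 = 0
    · exfalso
      have ha0 : a = 0 := by simp [ha, hl]
      rw [ha0] at habs₀
      rw [abs_sub_comm] at habs₀
      simp only [mul_zero, zero_pow, sub_zero] at habs₀
      rw [abs_of_nonneg (by linarith)] at habs₀
      linarith
    · have hzl1 : (1:ℝ) ≤ znorm k.1 := one_le_znorm hl
      have hzl_le : znorm k.1 ≤ N₀ := (hzsplit k.1 k.2 hnorm).1
      have hDio := hdio k.1 hl
      have hpowle : znorm k.1 ^ ν ≤ N₀ ^ ν := pow_le_pow_left₀ (by linarith) hzl_le ν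
      have hpowpos : (0:ℝ) < znorm k.1 ^ ν := by positivity
      have hNpow : (0:ℝ) < N₀ ^ ν := by positivity
      have haN : γ₀ / N₀ ^ ν ≤ |a| := le_trans (by gcongr) hDio
      have hapos : 0 < |a| := lt_of_lt_of_le (by positivity) haN
      set s : ℝ := Real.sqrt (b + ε) with hs
      set t : ℝ := Real.sqrt (b - ε) with ht
      have hs2 : s ^ 2 = b + ε := Real.sq_sqrt (by linarith)
      have ht2 : t ^ 2 = b - ε := Real.sq_sqrt (by linarith)
      have hs0 : 0 ≤ s := Real.sqrt_nonneg _
      have ht0 : 0 ≤ t := Real.sqrt_nonneg _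
      have hs1 : 1 ≤ s := by nlinarith
      have hts : t ≤ s := by nlinarith
      have hsub2 : Bad k ⊆ Set.Icc (t / |a|) (s / |a|) := by
        rintro lam ⟨hlIcc, -, -, hlabs⟩
        obtain ⟨hl1, hl2⟩ := hlIcc
        have hx : 0 ≤ lam * |a| := by positivity
        have hsq : (lam * |a|) ^ 2 = (lam * a) ^ 2 := by
          rw [mul_pow, mul_pow, sq_abs]
        obtain ⟨hL, hR⟩ := abs_lt.mp hlabs
        constructor
        · rw [div_le_iff₀ hapos]
          calc t ≤ Real.sqrt ((lam * |a|) ^ 2) :=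
                Real.sqrt_le_sqrt (by rw [hsq]; linarith)
            _ = lam * |a| := Real.sqrt_sq hx
        · rw [le_div_iff₀ hapos]
          exact (Real.le_sqrt hx (by linarith)).mpr (by rw [hsq]; linarith)
      calc volume (Bad k) ≤ volume (Set.Icc (t / |a|) (s / |a|)) := measure_mono hsub2
        _ = ENNReal.ofReal (s / |a| - t / |a|) := Real.volume_Icc
        _ ≤ ENNReal.ofReal (2 * ε * N₀ ^ ν / γ₀) := by
            apply ENNReal.ofReal_le_ofReal
            rw [div_sub_div_same, div_le_div_iff₀ hapos hγ]
            have hst : s - t ≤ 2 * ε := by nlinarith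
            have h₁ : γ₀ ≤ |a| * N₀ ^ ν := by
              rw [div_le_iff₀ hNpow] at haN; linarith
            nlinarith [mul_nonneg (sub_nonneg.mpr hts) (sub_nonneg.mpr h₁),
              mul_nonneg (mul_nonneg (le_of_lt hεpos) (le_of_lt (lt_of_lt_of_le one_pos hs1))) (le_of_lt hapos),
              mul_le_mul_of_nonneg_right hst (mul_nonneg (abs_nonneg a) (le_of_lt hNpow))]
    -- end per-index bound
  -- sum up
  have hcard : ((S.card : ℝ)) ≤ (3 * N₀) ^ (ν + d) := by
    have hM0 : (0:ℤ) ≤ M := by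
      rw [hMdef]; exact Int.le_floor.mpr (by norm_num; linarith)
    have hcard1 : S.card = ((2 * M + 1).toNat) ^ ν * ((2 * M + 1).toNat) ^ d := by
      rw [hSdef, Finset.card_product, Pi.card_Icc, Pi.card_Icc]
      simp only [Int.card_Icc]
      have h : M + 1 - -M = 2 * M + 1 := by ring
      rw [h]
      simp [Finset.prod_const]
    have htN : ((2 * M + 1).toNat : ℝ) ≤ 3 * N₀ := by
      have h1 : (((2 * M + 1).toNat : ℤ) : ℝ) = ((2 * M + 1 : ℤ) : ℝ) := by
        congr 1; exact Int.toNat_of_nonneg (by omega)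
      have h2 : ((M : ℤ) : ℝ) ≤ N₀ := Int.floor_le N₀
      push_cast at h1 ⊢
      rw [h1]; push_cast; linarith
    rw [hcard1]
    push_cast
    rw [← pow_add]
    exact pow_le_pow_left₀ (by positivity) htN (ν + d)
  calc volume _ ≤ ∑ k ∈ S, volume (Bad k) :=
        le_trans (measure_mono hsub) (measure_biUnion_finset_le S Bad)
    _ ≤ S.card • ENNReal.ofReal (2 * ε * N₀ ^ ν / γ₀) := Finset.sum_le_card_nsmul _ _ _ hvol
    _ = ENNReal.ofReal ((S.card : ℝ) * (2 * ε * N₀ ^ ν / γ₀)) := by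
        rw [nsmul_eq_mul, ← ENNReal.ofReal_natCast S.card,
          ← ENNReal.ofReal_mul (Nat.cast_nonneg _)]
    _ ≤ ENNReal.ofReal (2 * 3 ^ (ν + d) / γ₀ * N₀⁻¹) := by
        apply ENNReal.ofReal_le_ofReal
        have hstep : ((S.card : ℝ)) * (2 * ε * N₀ ^ ν / γ₀)
            ≤ (3 * N₀) ^ (ν + d) * (2 * ε * N₀ ^ ν / γ₀) := by
          apply mul_le_mul_of_nonneg_right hcard
          positivity
        refine hstep.trans ?_
        have hkey : (N₀:ℝ) ^ (ν + d) * ε * N₀ ^ ν ≤ N₀⁻¹ := by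
          have heq : (N₀:ℝ) ^ (ν + d) * ε * N₀ ^ ν
              = N₀ ^ (((ν + d : ℕ) : ℝ) + (-τ₀) + ((ν : ℕ) : ℝ)) := by
            rw [Real.rpow_add hN0, Real.rpow_add hN0, Real.rpow_natCast,
              Real.rpow_natCast, hεdef]
          rw [heq, ← Real.rpow_neg_one N₀]
          apply Real.rpow_le_rpow_of_exponent_le hN1
          push_cast
          linarith
        calc (3 * N₀ : ℝ) ^ (ν + d) * (2 * ε * N₀ ^ ν / γ₀)
            = (2 * 3 ^ (ν + d) / γ₀) * (N₀ ^ (ν + d) * ε * N₀ ^ ν) := by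
              rw [mul_pow]; ring
          _ ≤ (2 * 3 ^ (ν + d) / γ₀) * N₀⁻¹ := by
              apply mul_le_mul_of_nonneg_left hkey
              positivity
end
end
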